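/- For every natural number k, if two finite simple graphs have the same chromatic symmetric function, then they have the same number of matchings with exactly k edges. -/
import Mathlib

open SimpleGraph

open scoped Classical in
noncomputable def csf {V : Type*} [Fintype V] (G : SimpleGraph V) (n : ℕ) :
    MvPolynomial (Fin n) ℤ :=
  ∑ κ : V → Fin n,
    if ∀ u w, G.Adj u w → κ u ≠ κ w then ∏ v, MvPolynomial.X (κ v) else 0

noncomputable def matchingCount {V : Type*} (G : SimpleGraph V) (k : ℕ) : ℕ :=
  Set.ncard {M : Finset (Sym2 V) | ↑M ⊆ G.edgeSet ∧ M.card = k ∧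
    ∀ e ∈ M, ∀ f ∈ M, e ≠ f → ∀ v : V, ¬(v ∈ e ∧ v ∈ f)}

open SimpleGraph Finset
open scoped Classical

section Helpers

variable {V : Type*}

/-- vertices of an edge as a Finset -/
noncomputable def eVerts [Fintype V] (e : Sym2 V) : Finset V :=
  Finset.univ.filter (· ∈ e)

lemma mem_eVerts [Fintype V] (e : Sym2 V) (v : V) : v ∈ eVerts e ↔ v ∈ e := by
  simp [eVerts]

lemma eVerts_pair [Fintype V] {a b : V} : eVerts s(a, b) = {a, b} := by
  ext v; simp [eVerts, Sym2.mem_iff]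

lemma card_eVerts [Fintype V] {e : Sym2 V} (h : ¬ e.IsDiag) : (eVerts e).card = 2 := by
  induction e with
  | _ a b =>
    rw [Sym2.mk_isDiag_iff] at h
    rw [eVerts_pair, Finset.card_insert_of_notMem (by simpa using h), Finset.card_singleton]

/-- The matching predicate, matching the one in `matchingCount`. -/
def IsMatch (G : SimpleGraph V) (M : Finset (Sym2 V)) : Prop :=
  ↑M ⊆ G.edgeSet ∧ ∀ e ∈ M, ∀ f ∈ M, e ≠ f → ∀ v : V, ¬(v ∈ e ∧ v ∈ f)

noncomputable def matchFinset [Fintype V] (G : SimpleGraph V) (k : ℕ) : Finset (Finset (Sym2 V)) :=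
  Finset.univ.filter (fun M => IsMatch G M ∧ M.card = k)

lemma mem_matchFinset [Fintype V] {G : SimpleGraph V} {k : ℕ} {M : Finset (Sym2 V)} :
    M ∈ matchFinset G k ↔ IsMatch G M ∧ M.card = k := by
  simp [matchFinset]

lemma matchingCount_eq_card [Fintype V] (G : SimpleGraph V) (k : ℕ) :
    matchingCount G k = (matchFinset G k).card := by
  rw [matchingCount, Set.ncard_eq_toFinset_card']
  congr 1
  ext M
  simp only [Set.mem_toFinset, Set.mem_setOf_eq, mem_matchFinset, IsMatch]
  tauto

/-- support of a set of edges -/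
noncomputable def suppF [Fintype V] (M : Finset (Sym2 V)) : Finset V :=
  M.biUnion eVerts

lemma mem_suppF [Fintype V] {M : Finset (Sym2 V)} {v : V} :
    v ∈ suppF M ↔ ∃ e ∈ M, v ∈ e := by
  simp [suppF, mem_eVerts]

lemma card_suppF [Fintype V] {G : SimpleGraph V} {M : Finset (Sym2 V)}
    (hM : IsMatch G M) : (suppF M).card = 2 * M.card := by
  rw [suppF, Finset.card_biUnion]
  · rw [Finset.sum_congr rfl fun e he => card_eVerts (G.not_isDiag_of_mem_edgeSet (hM.1 he))]
    simp [mul_comm]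
  · intro e he f hf hef
    simp only [Finset.disjoint_left, mem_eVerts]
    intro v hv hv'
    exact hM.2 e he f hf hef v ⟨hv, hv'⟩

lemma matchingCount_eq_zero [Fintype V] (G : SimpleGraph V) (k : ℕ)
    (hk : Fintype.card V < 2 * k) : matchingCount G k = 0 := by
  rw [matchingCount_eq_card, Finset.card_eq_zero]
  rw [Finset.eq_empty_iff_forall_notMem]
  intro M hM
  rw [mem_matchFinset] at hM
  have h1 : (suppF M).card = 2 * k := by rw [card_suppF hM.1, hM.2]
  have := Finset.card_le_univ (suppF M)
  rw [h1] at this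
  omega

end Helpers

section Coeff

variable {V : Type*} [Fintype V]

noncomputable def colorFinset (G : SimpleGraph V) (n : ℕ) (d : Fin n → ℕ) :
    Finset (V → Fin n) :=
  Finset.univ.filter (fun κ => (∀ u w, G.Adj u w → κ u ≠ κ w) ∧
    ∀ i, (Finset.univ.filter (fun v => κ v = i)).card = d i)

lemma prod_X_eq_monomial {n : ℕ} (κ : V → Fin n) (s : Finset V) :
    (∏ v ∈ s, MvPolynomial.X (κ v) : MvPolynomial (Fin n) ℤ) =
      MvPolynomial.monomial (∑ v ∈ s, Finsupp.single (κ v) 1) 1 := by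
  induction s using Finset.cons_induction with
  | empty => simp [MvPolynomial.monomial_zero']
  | cons a s ha ih =>
    rw [Finset.prod_cons, Finset.sum_cons, ih, MvPolynomial.X,
      MvPolynomial.monomial_mul, one_mul]

lemma csf_eq_sum_monomial (G : SimpleGraph V) (n : ℕ) :
    csf G n = ∑ κ ∈ (Finset.univ : Finset (V → Fin n)),
      (if ∀ u w, G.Adj u w → κ u ≠ κ w
        then MvPolynomial.monomial (∑ v, Finsupp.single (κ v) 1) (1:ℤ) else 0) := by
  rw [csf]
  refine Finset.sum_congr rfl fun κ _ => ?_
  split_ifs with h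
  · exact prod_X_eq_monomial κ Finset.univ
  · rfl

lemma csf_coeff (G : SimpleGraph V) (n : ℕ) (d : Fin n →₀ ℕ) :
    (csf G n).coeff d = ((colorFinset G n (fun i => d i)).card : ℤ) := by
  rw [csf_eq_sum_monomial, MvPolynomial.coeff_sum]
  have key : ∀ κ : V → Fin n,
      MvPolynomial.coeff d (if ∀ u w, G.Adj u w → κ u ≠ κ w
          then MvPolynomial.monomial (∑ v, Finsupp.single (κ v) 1) (1:ℤ) else 0) =
        if (∀ u w, G.Adj u w → κ u ≠ κ w) ∧
            ∀ i, (Finset.univ.filter (fun v => κ v = i)).card = d i then 1 else 0 := by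
    intro κ
    have hQ : (∑ v, Finsupp.single (κ v) 1 = d) ↔
        ∀ i, (Finset.univ.filter (fun v => κ v = i)).card = d i := by
      rw [DFunLike.ext_iff]
      apply forall_congr'
      intro i
      rw [Finsupp.finset_sum_apply]
      have h1 : ∀ v : V, (Finsupp.single (κ v) (1:ℕ)) i = if κ v = i then 1 else 0 :=
        fun v => Finsupp.single_apply
      rw [Finset.sum_congr rfl (fun v _ => h1 v), ← Finset.card_filter]
    rw [apply_ite (MvPolynomial.coeff d), MvPolynomial.coeff_zero,
      MvPolynomial.coeff_monomial]
    simp only [← hQ]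
    split_ifs <;> simp_all
  simp only [key]
  rw [Finset.sum_boole]
  simp [colorFinset]

end Coeff

section CardEq

variable {V : Type*} [Fintype V]

noncomputable def properFinset (G : SimpleGraph V) (n : ℕ) : Finset (V → Fin n) :=
  Finset.univ.filter (fun κ => ∀ u w, G.Adj u w → κ u ≠ κ w)

lemma csf_aeval (G : SimpleGraph V) (n : ℕ) :
    MvPolynomial.aeval (fun _ : Fin n => (Polynomial.X : Polynomial ℤ)) (csf G n) =
      ((properFinset G n).card : ℤ) • (Polynomial.X : Polynomial ℤ) ^ (Fintype.card V) := by
  rw [csf, map_sum]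
  have key : ∀ κ : V → Fin n,
      MvPolynomial.aeval (fun _ : Fin n => (Polynomial.X : Polynomial ℤ))
        (if ∀ u w, G.Adj u w → κ u ≠ κ w
          then (∏ v, MvPolynomial.X (κ v) : MvPolynomial (Fin n) ℤ) else 0) =
      (if ∀ u w, G.Adj u w → κ u ≠ κ w
        then (Polynomial.X : Polynomial ℤ) ^ (Fintype.card V) else 0) := by
    intro κ
    split_ifs
    · rw [map_prod]
      simp [Finset.prod_const]
    · exact map_zero _
  simp only [key]
  rw [← Finset.sum_filter, Finset.sum_const, properFinset]
  rw [natCast_zsmul]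

lemma card_eq_of_csf_eq {W : Type*} [Fintype W] (G : SimpleGraph V) (H : SimpleGraph W)
    (h : ∀ n, csf G n = csf H n) : Fintype.card V = Fintype.card W := by
  set n := Fintype.card V + Fintype.card W with hn
  have h1 := congrArg (MvPolynomial.aeval (fun _ : Fin n => (Polynomial.X : Polynomial ℤ))) (h n)
  rw [csf_aeval, csf_aeval] at h1
  have hGpos : 0 < (properFinset G n).card := by
    obtain ⟨emb⟩ : Nonempty (V ↪ Fin n) := by
      rw [Function.Embedding.nonempty_iff_card_le, Fintype.card_fin]
      omega
    refine Finset.card_pos.2 ⟨emb, ?_⟩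
    simp only [properFinset, Finset.mem_filter, Finset.mem_univ, true_and]
    exact fun u w huw => fun hc => G.ne_of_adj huw (emb.injective hc)
  by_contra hne
  have h2 := congrArg (fun p => Polynomial.coeff p (Fintype.card V)) h1
  simp only [Polynomial.coeff_smul, Polynomial.coeff_X_pow] at h2
  simp only [eq_self_iff_true, if_true, if_neg hne, smul_eq_mul, mul_one,
    mul_zero, smul_zero] at h2
  rw [Int.natCast_eq_zero] at h2
  omega

end CardEq

section L2

variable {V : Type*} [Fintype V]

/-- the set of "pair edges" of a coloring: edges whose vertex set is exactly the
fiber of a color `i < k`. -/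
noncomputable def Mset {n : ℕ} (k : ℕ) (κ : V → Fin n) : Finset (Sym2 V) :=
  Finset.univ.filter (fun e => ∃ i : Fin n, (i : ℕ) < k ∧ ∀ v, v ∈ e ↔ κ v = i)

lemma mem_Mset {n k : ℕ} {κ : V → Fin n} {e : Sym2 V} :
    e ∈ Mset k κ ↔ ∃ i : Fin n, (i : ℕ) < k ∧ ∀ v, v ∈ e ↔ κ v = i := by
  simp [Mset]

/-- validity of a coloring: proper with fibers of size 2 on the first k colors, 1 later -/
def Valid (G : SimpleGraph V) (k r : ℕ) (κ : V → Fin (k + r)) : Prop :=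
  (∀ u w, G.Adj u w → κ u ≠ κ w) ∧
    ∀ i, (Finset.univ.filter (fun v => κ v = i)).card = if (i : ℕ) < k then 2 else 1

lemma valid_iff_mem {G : SimpleGraph V} {k r : ℕ} {κ : V → Fin (k + r)} :
    κ ∈ colorFinset G (k + r) (fun i => if (i : ℕ) < k then 2 else 1) ↔ Valid G k r κ := by
  simp [colorFinset, Valid]

variable {G : SimpleGraph V} {k r : ℕ} {κ : V → Fin (k + r)}

lemma Valid.exists_pair (hκ : Valid G k r κ) {i : Fin (k + r)} (hi : (i : ℕ) < k) :
    ∃ a b : V, a ≠ b ∧ Finset.univ.filter (fun v => κ v = i) = {a, b} := by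
  have h2 := hκ.2 i
  rw [if_pos hi] at h2
  obtain ⟨a, b, hab, hfil⟩ := Finset.card_eq_two.mp h2
  exact ⟨a, b, hab, hfil⟩

lemma Valid.exists_single (hκ : Valid G k r κ) {i : Fin (k + r)} (hi : ¬ (i : ℕ) < k) :
    ∃ a : V, Finset.univ.filter (fun v => κ v = i) = {a} := by
  have h2 := hκ.2 i
  rw [if_neg hi] at h2
  exact Finset.card_eq_one.mp h2

lemma Valid.mset_spec (hκ : Valid G k r κ) {e : Sym2 V} (he : e ∈ Mset k κ) :
    ∃ (i : Fin (k + r)) (a b : V), (i : ℕ) < k ∧ a ≠ b ∧ e = s(a, b) ∧ κ a = i ∧ κ b = i ∧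
      (∀ v, v ∈ e ↔ κ v = i) := by
  obtain ⟨i, hik, hmem⟩ := mem_Mset.mp he
  obtain ⟨a, b, hab, hfil⟩ := hκ.exists_pair hik
  have ha : κ a = i := by
    have : a ∈ Finset.univ.filter (fun v => κ v = i) := by
      rw [hfil]; exact Finset.mem_insert_self a {b}
    simpa using this
  have hb : κ b = i := by
    have : b ∈ Finset.univ.filter (fun v => κ v = i) := by
      rw [hfil]; exact Finset.mem_insert_of_mem (Finset.mem_singleton_self b)
    simpa using this
  have hae : a ∈ e := (hmem a).mpr ha
  have hbe : b ∈ e := (hmem b).mpr hb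
  exact ⟨i, a, b, hik, hab, ((Sym2.mem_and_mem_iff hab).mp ⟨hae, hbe⟩), ha, hb, hmem⟩

lemma card_filter_fin_lt {m k : ℕ} (hk : k ≤ m) :
    ((Finset.univ : Finset (Fin m)).filter (fun i => i.val < k)).card = k := by
  have : ((Finset.univ : Finset (Fin m)).filter (fun i => i.val < k)) =
      Finset.map (Fin.castLEEmb hk) Finset.univ := by
    ext j
    simp only [Finset.mem_filter, Finset.mem_univ, true_and, Finset.mem_map,
      Fin.castLEEmb_apply]
    constructor
    · intro hj
      exact ⟨⟨(j : ℕ), hj⟩, by ext; simp⟩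
    · rintro ⟨i, rfl⟩
      simpa using i.isLt
  rw [this, Finset.card_map, Finset.card_univ, Fintype.card_fin]

lemma Valid.mset_mem (hκ : Valid G k r κ) (hkr : k ≤ k + r) :
    Mset k κ ∈ matchFinset Gᶜ k := by
  rw [mem_matchFinset]
  have disj : ∀ e ∈ Mset k κ, ∀ f ∈ Mset k κ, e ≠ f → ∀ v : V, ¬(v ∈ e ∧ v ∈ f) := by
    intro e he f hf hef v ⟨hve, hvf⟩
    obtain ⟨i, a, b, hik, hab, hee, ha, hb, hmem⟩ := hκ.mset_spec he
    obtain ⟨j, _, _, hjk, _, _, _, _, hmem'⟩ := hκ.mset_spec hf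
    have : i = j := by rw [← (hmem v).mp hve, ← (hmem' v).mp hvf]
    refine hef ?_
    have hae : a ∈ e := (hmem a).mpr ha
    have hbe : b ∈ e := (hmem b).mpr hb
    have haf : a ∈ f := (hmem' a).mpr (this ▸ ha)
    have hbf : b ∈ f := (hmem' b).mpr (this ▸ hb)
    exact Sym2.eq_of_ne_mem hab hae hbe haf hbf
  refine ⟨⟨?_, disj⟩, ?_⟩
  · intro e he
    obtain ⟨i, a, b, hik, hab, hee, ha, hb, hmem⟩ := hκ.mset_spec he
    rw [hee, SimpleGraph.mem_edgeSet, SimpleGraph.compl_adj]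
    exact ⟨hab, fun hadj => hκ.1 a b hadj (ha.trans hb.symm)⟩
  · have hb : (Mset k κ).card =
        ((Finset.univ : Finset (Fin (k + r))).filter (fun i => i.val < k)).card := by
      refine Finset.card_bij (fun e he => (mem_Mset.mp he).choose) ?_ ?_ ?_
      · intro e he
        simp only [Finset.mem_filter, Finset.mem_univ, true_and]
        exact (mem_Mset.mp he).choose_spec.1
      · intro e he f hf hco
        have hsp := (mem_Mset.mp he).choose_spec.2
        have hsp' := (mem_Mset.mp hf).choose_spec.2
        have hco' : (mem_Mset.mp he).choose = (mem_Mset.mp hf).choose := hco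
        rw [hco'] at hsp
        obtain ⟨i, a, b, hik, hab, hee, ha, hb, hmem⟩ := hκ.mset_spec he
        have hae : a ∈ e := (hmem a).mpr ha
        have hbe : b ∈ e := (hmem b).mpr hb
        exact Sym2.eq_of_ne_mem hab hae hbe
          ((hsp' a).mpr ((hsp a).mp hae)) ((hsp' b).mpr ((hsp b).mp hbe))
      · intro i hi
        rw [Finset.mem_filter] at hi
        obtain ⟨a, b, hab, hfil⟩ := hκ.exists_pair hi.2
        have ha : κ a = i := by
          have : a ∈ Finset.univ.filter (fun v => κ v = i) := by
            rw [hfil]; exact Finset.mem_insert_self a {b}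
          simpa using this
        have hb' : κ b = i := by
          have : b ∈ Finset.univ.filter (fun v => κ v = i) := by
            rw [hfil]; exact Finset.mem_insert_of_mem (Finset.mem_singleton_self b)
          simpa using this
        have hmem : ∀ v, v ∈ s(a, b) ↔ κ v = i := by
          intro v
          rw [Sym2.mem_iff]
          constructor
          · rintro (rfl | rfl)
            · exact ha
            · exact hb' 
          · intro hv
            have : v ∈ ({a, b} : Finset V) := by
              rw [← hfil]; simp [hv]
            simpa using this
        have hmem' : s(a, b) ∈ Mset k κ := mem_Mset.mpr ⟨i, hi.2, hmem⟩
        refine ⟨s(a, b), hmem', ?_⟩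
        have hsp := (mem_Mset.mp hmem').choose_spec.2
        have := (hsp a).mp (Sym2.mem_mk_left a b)
        exact this.symm.trans ha
    rw [hb, card_filter_fin_lt hkr]

end L2

section P2

variable {V : Type*} [Fintype V] {G : SimpleGraph V} {k r : ℕ} {κ : V → Fin (k + r)}
  {M : Finset (Sym2 V)}

lemma Valid.exu_edge (hκ : Valid G k r κ) (hMeq : Mset k κ = M) {i : Fin (k + r)}
    (hik : i.val < k) : ∃! e, e ∈ M ∧ ∀ v, v ∈ e ↔ κ v = i := by
  obtain ⟨a, b, hab, hfil⟩ := hκ.exists_pair hik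
  have ha : κ a = i := by
    have : a ∈ Finset.univ.filter (fun v => κ v = i) := by
      rw [hfil]; exact Finset.mem_insert_self a {b}
    simpa using this
  have hb : κ b = i := by
    have : b ∈ Finset.univ.filter (fun v => κ v = i) := by
      rw [hfil]; exact Finset.mem_insert_of_mem (Finset.mem_singleton_self b)
    simpa using this
  have hmem : ∀ v, v ∈ s(a, b) ↔ κ v = i := by
    intro v
    rw [Sym2.mem_iff]
    constructor
    · rintro (rfl | rfl)
      · exact ha
      · exact hb
    · intro hv
      have : v ∈ ({a, b} : Finset V) := by rw [← hfil]; simp [hv]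
      simpa using this
  refine ⟨s(a, b), ⟨?_, hmem⟩, ?_⟩
  · rw [← hMeq]; exact mem_Mset.mpr ⟨i, hik, hmem⟩
  · rintro e ⟨heM, hmem'⟩
    exact Sym2.eq_of_ne_mem hab ((hmem' a).mpr ha) ((hmem' b).mpr hb)
      (Sym2.mem_mk_left a b) (Sym2.mem_mk_right a b)

lemma Valid.exu_single (hκ : Valid G k r κ) {i : Fin (k + r)} (hik : ¬ i.val < k) :
    ∃! v, v ∈ (Finset.univ : Finset V) ∧ κ v = i := by
  obtain ⟨a, hfil⟩ := hκ.exists_single hik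
  have ha : κ a = i := by
    have : a ∈ Finset.univ.filter (fun v => κ v = i) := by
      rw [hfil]; exact Finset.mem_singleton_self a
    simpa using this
  refine ⟨a, ⟨Finset.mem_univ a, ha⟩, ?_⟩
  rintro v ⟨-, hv⟩
  have : v ∈ ({a} : Finset V) := by rw [← hfil]; simp [hv]
  simpa using this

lemma exu_edge_of_mem_supp (hM : M ∈ matchFinset Gᶜ k) {v : V} (h : v ∈ suppF M) :
    ∃! e, e ∈ M ∧ v ∈ e := by
  obtain ⟨e, heM, hve⟩ := mem_suppF.mp h
  refine ⟨e, ⟨heM, hve⟩, ?_⟩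
  rintro f ⟨hfM, hvf⟩
  by_contra hne
  exact (mem_matchFinset.mp hM).1.2 f hfM e heM hne v ⟨hvf, hve⟩

/-- the color of a vertex not in the support is at least `k` -/
lemma Valid.color_notin_supp (hκ : Valid G k r κ) (hMeq : Mset k κ = M) {v : V}
    (h : v ∉ suppF M) : ¬ (κ v).val < k := by
  intro hlt
  obtain ⟨a, b, hab, hfil⟩ := hκ.exists_pair hlt
  have hv : v ∈ ({a, b} : Finset V) := by rw [← hfil]; simp
  have ha : κ a = κ v := by
    have : a ∈ Finset.univ.filter (fun w => κ w = κ v) := by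
      rw [hfil]; exact Finset.mem_insert_self a {b}
    simpa using this
  have hb : κ b = κ v := by
    have : b ∈ Finset.univ.filter (fun w => κ w = κ v) := by
      rw [hfil]; exact Finset.mem_insert_of_mem (Finset.mem_singleton_self b)
    simpa using this
  have hmem : ∀ w, w ∈ s(a, b) ↔ κ w = κ v := by
    intro w
    rw [Sym2.mem_iff]
    constructor
    · rintro (rfl | rfl)
      · exact ha
      · exact hb
    · intro hw
      have : w ∈ ({a, b} : Finset V) := by rw [← hfil]; simp [hw]
      simpa using this
  have : s(a, b) ∈ Mset k κ := mem_Mset.mpr ⟨κ v, hlt, hmem⟩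
  rw [hMeq] at this
  refine h (mem_suppF.mpr ⟨s(a, b), this, ?_⟩)
  have : v ∈ ({a, b} : Finset V) := by rw [← hfil]; simp
  simp only [Finset.mem_insert, Finset.mem_singleton] at this
  rcases this with rfl | rfl
  · exact Sym2.mem_mk_left v b
  · exact Sym2.mem_mk_right a v

lemma Valid.notin_supp_of_color_ge (hκ : Valid G k r κ) (hMeq : Mset k κ = M) {v : V}
    (h : ¬ (κ v).val < k) : v ∉ suppF M := by
  intro hs
  obtain ⟨e, heM, hve⟩ := mem_suppF.mp hs
  rw [← hMeq] at heM
  obtain ⟨i, hik, hmem⟩ := mem_Mset.mp heM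
  rw [(hmem v).mp hve] at h
  exact h hik

lemma sym2_exists_mem (e : Sym2 V) : ∃ a, a ∈ e :=
  Sym2.ind (fun a b => ⟨a, Sym2.mem_mk_left a b⟩) e

lemma castAdd_inj {k r : ℕ} {i j : Fin k} (h : Fin.castAdd r i = Fin.castAdd r j) : i = j :=
  Fin.ext (by simpa using congrArg Fin.val h)

lemma natAdd_inj {k r : ℕ} {i j : Fin r} (h : Fin.natAdd k i = Fin.natAdd k j) : i = j := by
  have := congrArg Fin.val h
  simp only [Fin.coe_natAdd] at this
  exact Fin.ext (by omega)

/-- the forward map of the fiber bijection -/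
noncomputable def phiMap (G : SimpleGraph V) (k r : ℕ) (M : Finset (Sym2 V)) :
    {κ : V → Fin (k + r) // Valid G k r κ ∧ Mset k κ = M} →
      ((Fin k ↪ {e // e ∈ M}) × (Fin r ↪ {v // v ∉ suppF M})) :=
  fun s =>
    (⟨fun i => ⟨M.choose (fun e => ∀ v, v ∈ e ↔ s.1 v = Fin.castAdd r i)
        (s.2.1.exu_edge s.2.2 (by simpa using i.isLt)),
        Finset.choose_mem _ _ _⟩, by
      intro i j hij
      have hi := Finset.choose_property (fun e => ∀ v, v ∈ e ↔ s.1 v = Fin.castAdd r i) M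
        (s.2.1.exu_edge s.2.2 (by simpa using i.isLt))
      have hj := Finset.choose_property (fun e => ∀ v, v ∈ e ↔ s.1 v = Fin.castAdd r j) M
        (s.2.1.exu_edge s.2.2 (by simpa using j.isLt))
      rw [Subtype.ext_iff] at hij
      simp only at hij
      rw [hij] at hi
      obtain ⟨a, ha⟩ := sym2_exists_mem
        (M.choose (fun e => ∀ v, v ∈ e ↔ s.1 v = Fin.castAdd r j)
          (s.2.1.exu_edge s.2.2 (by simpa using j.isLt)))
      have h1 := (hi a).mp ha
      have h2 := (hj a).mp ha
      rw [h1] at h2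
      exact castAdd_inj h2⟩,
     ⟨fun j => ⟨Finset.univ.choose (fun v => s.1 v = Fin.natAdd k j)
        (s.2.1.exu_single (by simp only [Fin.coe_natAdd]; omega)),
        s.2.1.notin_supp_of_color_ge s.2.2 (by
          rw [Finset.choose_property (fun v => s.1 v = Fin.natAdd k j) Finset.univ
            (s.2.1.exu_single (by simp only [Fin.coe_natAdd]; omega))]
          simp only [Fin.coe_natAdd]; omega)⟩, by
      intro i j hij
      rw [Subtype.ext_iff] at hij
      simp only at hij
      have hi := Finset.choose_property (fun v => s.1 v = Fin.natAdd k i) Finset.univ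
        (s.2.1.exu_single (by simp only [Fin.coe_natAdd]; omega))
      have hj := Finset.choose_property (fun v => s.1 v = Fin.natAdd k j) Finset.univ
        (s.2.1.exu_single (by simp only [Fin.coe_natAdd]; omega))
      rw [hij, hj] at hi
      exact natAdd_inj hi.symm⟩)

end P2

section P2b

variable {V : Type*} [Fintype V] {G : SimpleGraph V} {k r : ℕ} {M : Finset (Sym2 V)}

lemma phiMap_fst_spec (s : {κ : V → Fin (k + r) // Valid G k r κ ∧ Mset k κ = M}) (i : Fin k) :
    ∀ v, (v ∈ (((phiMap G k r M) s).1 i : Sym2 V)) ↔ s.1 v = Fin.castAdd r i := by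
  exact Finset.choose_property (fun e => ∀ v, v ∈ e ↔ s.1 v = Fin.castAdd r i) M
    (s.2.1.exu_edge s.2.2 (by simpa using i.isLt))

lemma phiMap_snd_spec (s : {κ : V → Fin (k + r) // Valid G k r κ ∧ Mset k κ = M}) (j : Fin r) :
    s.1 ((((phiMap G k r M) s).2 j : {v // v ∉ suppF M}) : V) = Fin.natAdd k j := by
  exact Finset.choose_property (fun v => s.1 v = Fin.natAdd k j) Finset.univ
    (s.2.1.exu_single (by simp only [Fin.coe_natAdd]; omega))

lemma phiMap_inj : Function.Injective (phiMap G (V := V) k r M) := by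
  rintro s t heq
  have hf : ∀ i : Fin k, ((phiMap G k r M) s).1 i = ((phiMap G k r M) t).1 i := by
    intro i; rw [heq]
  have hg : ∀ j : Fin r, ((phiMap G k r M) s).2 j = ((phiMap G k r M) t).2 j := by
    intro j; rw [heq]
  apply Subtype.ext; funext v
  by_cases hv : (s.1 v).val < k
  · set i : Fin k := ⟨(s.1 v).val, hv⟩ with hi
    have hcast : Fin.castAdd r i = s.1 v := Fin.ext rfl
    have h1 : v ∈ (((phiMap G k r M) s).1 i : Sym2 V) :=
      (phiMap_fst_spec s i v).mpr hcast.symm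
    rw [hf i] at h1
    have h2 := (phiMap_fst_spec t i v).mp h1
    rw [h2, hcast]
  · have hvlt : (s.1 v).val < k + r := (s.1 v).isLt
    set j : Fin r := ⟨(s.1 v).val - k, by omega⟩ with hj
    have hnat : Fin.natAdd k j = s.1 v := Fin.ext (by simp [hj]; omega)
    have hexu := s.2.1.exu_single (i := Fin.natAdd k j)
      (by simp only [Fin.coe_natAdd]; omega)
    have h1 : ((((phiMap G k r M) s).2 j : {v // v ∉ suppF M}) : V) = v := by
      have hc := phiMap_snd_spec s j
      exact (hexu.unique ⟨Finset.mem_univ _, hc⟩ ⟨Finset.mem_univ _, hnat.symm⟩)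
    rw [hg j] at h1
    have h2 := phiMap_snd_spec t j
    rw [h1] at h2
    rw [h2, hnat]

end P2b

section P2c

variable {V : Type*} [Fintype V] {G : SimpleGraph V} {k r : ℕ} {M : Finset (Sym2 V)}

lemma phiMap_surj (hM : M ∈ matchFinset Gᶜ k) (hN : 2 * k + r = Fintype.card V) :
    Function.Surjective (phiMap G (V := V) k r M) := by
  classical
  obtain ⟨⟨hMsub, hMdisj⟩, hMcard⟩ := mem_matchFinset.mp hM
  rintro ⟨f, g⟩
  have hcard1 : Fintype.card {e // e ∈ M} = k := by
    rw [Fintype.card_coe, hMcard]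
  have hcard2 : Fintype.card {v // v ∉ suppF M} = r := by
    rw [Fintype.card_subtype_compl]
    have : Fintype.card {v // v ∈ suppF M} = 2 * k := by
      rw [Fintype.card_coe, card_suppF ⟨hMsub, hMdisj⟩, hMcard]
    omega
  set F : Fin k ≃ {e // e ∈ M} := Equiv.ofBijective f
    ((Fintype.bijective_iff_injective_and_card f).mpr
      ⟨f.injective, by rw [hcard1, Fintype.card_fin]⟩) with hF
  set Gg : Fin r ≃ {v // v ∉ suppF M} := Equiv.ofBijective g
    ((Fintype.bijective_iff_injective_and_card g).mpr
      ⟨g.injective, by rw [hcard2, Fintype.card_fin]⟩) with hGg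
  have hFapp : ∀ i, F i = f i := fun i => rfl
  have hGapp : ∀ j, Gg j = g j := fun j => rfl
  set κ : V → Fin (k + r) := fun v =>
    if h : v ∈ suppF M then
      Fin.castAdd r (F.symm ⟨M.choose (fun e => v ∈ e) (exu_edge_of_mem_supp hM h),
        Finset.choose_mem _ _ _⟩)
    else Fin.natAdd k (Gg.symm ⟨v, h⟩) with hκ
  -- (A)
  have hA : ∀ (i : Fin k) (v : V), v ∈ (f i : Sym2 V) → κ v = Fin.castAdd r i := by
    intro i v hv
    have hs : v ∈ suppF M := mem_suppF.mpr ⟨f i, (f i).2, hv⟩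
    rw [hκ]
    simp only [dif_pos hs]
    congr 1
    have hch : (⟨M.choose (fun e => v ∈ e) (exu_edge_of_mem_supp hM hs),
        Finset.choose_mem _ _ _⟩ : {e // e ∈ M}) = f i := by
      apply Subtype.ext
      exact (exu_edge_of_mem_supp hM hs).unique
        ⟨Finset.choose_mem _ _ _,
          Finset.choose_property (fun e => v ∈ e) M (exu_edge_of_mem_supp hM hs)⟩
        ⟨(f i).2, hv⟩
    rw [hch, ← hFapp, Equiv.symm_apply_apply]
  -- (B)
  have hB : ∀ j : Fin r, κ ((g j : {v // v ∉ suppF M}) : V) = Fin.natAdd k j := by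
    intro j
    rw [hκ]
    simp only [dif_neg (g j).2]
    congr 1
    rw [Subtype.coe_eta, ← hGapp, Equiv.symm_apply_apply]
  -- (D)
  have hD : ∀ v : V, (κ v).val < k → ∃ i : Fin k, v ∈ (f i : Sym2 V) ∧
      κ v = Fin.castAdd r i := by
    intro v hlt
    by_cases h : v ∈ suppF M
    · refine ⟨F.symm ⟨M.choose (fun e => v ∈ e) (exu_edge_of_mem_supp hM h),
        Finset.choose_mem _ _ _⟩, ?_, ?_⟩
      · rw [← hFapp, Equiv.apply_symm_apply]
        exact Finset.choose_property (fun e => v ∈ e) M (exu_edge_of_mem_supp hM h)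
      · rw [hκ]; simp only [dif_pos h]
    · exfalso
      have : κ v = Fin.natAdd k (Gg.symm ⟨v, h⟩) := by rw [hκ]; simp only [dif_neg h]
      rw [this] at hlt
      simp only [Fin.coe_natAdd] at hlt
      omega
  -- (E)
  have hE : ∀ v : V, ¬ (κ v).val < k → ∃ j : Fin r, v = ((g j : {v // v ∉ suppF M}) : V) ∧
      κ v = Fin.natAdd k j := by
    intro v hge
    by_cases h : v ∈ suppF M
    · exfalso
      have : κ v = Fin.castAdd r (F.symm ⟨M.choose (fun e => v ∈ e)
          (exu_edge_of_mem_supp hM h), Finset.choose_mem _ _ _⟩) := by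
        rw [hκ]; simp only [dif_pos h]
      rw [this] at hge
      simp only [Fin.coe_castAdd] at hge
      exact hge (F.symm _).isLt
    · refine ⟨Gg.symm ⟨v, h⟩, ?_, ?_⟩
      · rw [← hGapp, Equiv.apply_symm_apply]
      · rw [hκ]; simp only [dif_neg h]
  -- properness
  have hproper : ∀ u w, G.Adj u w → κ u ≠ κ w := by
    intro u w hadj hc
    have hne : u ≠ w := G.ne_of_adj hadj
    by_cases hu : (κ u).val < k
    · obtain ⟨i, hui, hκu⟩ := hD u hu
      obtain ⟨i', hwi, hκw⟩ := hD w (by rw [← hc]; exact hu)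
      have : i = i' := castAdd_inj (by rw [← hκu, ← hκw, hc])
      subst this
      have hedge : (f i : Sym2 V) ∈ Gᶜ.edgeSet := hMsub (f i).2
      have : (f i : Sym2 V) = s(u, w) := (Sym2.mem_and_mem_iff hne).mp ⟨hui, hwi⟩
      rw [this, SimpleGraph.mem_edgeSet, SimpleGraph.compl_adj] at hedge
      exact hedge.2 hadj
    · obtain ⟨j, rfl, hκu⟩ := hE u hu
      obtain ⟨j', hw, hκw⟩ := hE w (by rw [← hc]; exact hu)
      have : j = j' := natAdd_inj (by rw [← hκu, ← hκw, hc])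
      subst this
      exact hne (by rw [hw])
  -- fibers
  have hfiber : ∀ i : Fin (k + r),
      (Finset.univ.filter (fun v => κ v = i)).card = if i.val < k then 2 else 1 := by
    intro i
    by_cases hik : i.val < k
    · rw [if_pos hik]
      set i0 : Fin k := ⟨i.val, hik⟩ with hi0
      have hcast : Fin.castAdd r i0 = i := Fin.ext rfl
      have hfil : Finset.univ.filter (fun v => κ v = i) = eVerts (f i0 : Sym2 V) := by
        ext v
        simp only [Finset.mem_filter, Finset.mem_univ, true_and, mem_eVerts]
        constructor
        · intro hv
          obtain ⟨i1, hvi, hκv⟩ := hD v (by rw [hv]; exact hik)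
          have : i1 = i0 := by
            apply Fin.ext
            have := congrArg Fin.val (hv ▸ hκv : i = Fin.castAdd r i1)
            simpa using this.symm
          rwa [← this]
        · intro hv
          rw [hA i0 v hv, hcast]
      rw [hfil]
      exact card_eVerts (Gᶜ.not_isDiag_of_mem_edgeSet (hMsub (f i0).2))
    · rw [if_neg hik]
      have hik' : i.val < k + r := i.isLt
      set j0 : Fin r := ⟨i.val - k, by omega⟩ with hj0
      have hnat : Fin.natAdd k j0 = i := Fin.ext (by simp [hj0]; omega)
      have hfil : Finset.univ.filter (fun v => κ v = i) = {((g j0 : {v // v ∉ suppF M}) : V)} := by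
        ext v
        simp only [Finset.mem_filter, Finset.mem_univ, true_and, Finset.mem_singleton]
        constructor
        · intro hv
          obtain ⟨j, hvj, hκv⟩ := hE v (by rw [hv]; exact hik)
          have : j = j0 := natAdd_inj (by rw [← hκv, hv, hnat])
          rw [hvj, this]
        · rintro rfl
          rw [hB j0, hnat]
      rw [hfil, Finset.card_singleton]
  have hValid : Valid G k r κ := ⟨hproper, hfiber⟩
  -- Mset κ = M
  have hMeq : Mset k κ = M := by
    ext e
    constructor
    · intro he
      obtain ⟨i, a, b, hik, hab, hee, ha, hb, hmem⟩ := hValid.mset_spec he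
      obtain ⟨i1, hai, hκa⟩ := hD a (by rw [ha]; exact hik)
      have hcast : Fin.castAdd r i1 = i := by rw [← hκa, ha]
      have hmem1 : ∀ v, v ∈ (f i1 : Sym2 V) ↔ κ v = i := by
        intro v
        constructor
        · intro hv
          rw [hA i1 v hv, hcast]
        · intro hv
          obtain ⟨i2, hvi, hκv⟩ := hD v (by rw [hv]; exact hik)
          have : i2 = i1 := castAdd_inj (by rw [← hκv, hv, hcast])
          rwa [← this]
      have : e = (f i1 : Sym2 V) := by
        refine Sym2.eq_of_ne_mem hab ((hmem a).mpr ha) ((hmem b).mpr hb) ?_ ?_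
        · exact (hmem1 a).mpr ha
        · exact (hmem1 b).mpr hb
      rw [this]
      exact (f i1).2
    · intro he
      set i : Fin k := F.symm ⟨e, he⟩ with hi
      have hfi : (f i : Sym2 V) = e := by
        rw [← hFapp, hi, Equiv.apply_symm_apply]
      refine mem_Mset.mpr ⟨Fin.castAdd r i, by simpa using i.isLt, ?_⟩
      intro v
      constructor
      · intro hv
        exact hA i v (by rwa [hfi])
      · intro hv
        have : v ∈ (f i : Sym2 V) := by
          obtain ⟨i2, hvi, hκv⟩ := hD v (by rw [hv]; simpa using i.isLt)
          have : i2 = i := castAdd_inj (by rw [← hκv, hv])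
          rwa [← this]
        rwa [hfi] at this
  -- conclusion
  refine ⟨⟨κ, hValid, hMeq⟩, ?_⟩
  have hfst : ((phiMap G k r M) ⟨κ, hValid, hMeq⟩).1 = f := by
    apply DFunLike.ext
    intro i
    apply Subtype.ext
    have hexu := hValid.exu_edge hMeq (i := Fin.castAdd r i) (by simpa using i.isLt)
    have h1 : ∀ v, v ∈ (((phiMap G k r M) ⟨κ, hValid, hMeq⟩).1 i : Sym2 V) ↔
        κ v = Fin.castAdd r i := phiMap_fst_spec _ i
    have h2 : ∀ v, v ∈ (f i : Sym2 V) ↔ κ v = Fin.castAdd r i := by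
      intro v
      constructor
      · exact hA i v
      · intro hv
        obtain ⟨i2, hvi, hκv⟩ := hD v (by rw [hv]; simpa using i.isLt)
        have : i2 = i := castAdd_inj (by rw [← hκv, hv])
        rwa [← this]
    exact hexu.unique ⟨((phiMap G k r M) ⟨κ, hValid, hMeq⟩).1 i |>.2, h1⟩ ⟨(f i).2, h2⟩
  have hsnd : ((phiMap G k r M) ⟨κ, hValid, hMeq⟩).2 = g := by
    apply DFunLike.ext
    intro j
    apply Subtype.ext
    have hexu := hValid.exu_single (i := Fin.natAdd k j) (by simp only [Fin.coe_natAdd]; omega)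
    exact hexu.unique ⟨Finset.mem_univ _,
      phiMap_snd_spec (⟨κ, hValid, hMeq⟩ : {κ : V → Fin (k + r) // Valid G k r κ ∧ Mset k κ = M}) j⟩
      ⟨Finset.mem_univ _, hB j⟩
  exact Prod.ext hfst hsnd

end P2c

section P2d

variable {V : Type*} [Fintype V] {G : SimpleGraph V} {k r : ℕ}

lemma fiber_card {M : Finset (Sym2 V)} (hM : M ∈ matchFinset Gᶜ k)
    (hN : 2 * k + r = Fintype.card V) :
    ((colorFinset G (k + r) (fun i => if (i : ℕ) < k then 2 else 1)).filter
      (fun κ => Mset k κ = M)).card = k.factorial * r.factorial := by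
  classical
  have hbij : Function.Bijective (phiMap G (V := V) k r M) :=
    ⟨phiMap_inj, phiMap_surj hM hN⟩
  have hcard := Fintype.card_of_bijective hbij
  have hcard1 : Fintype.card {e // e ∈ M} = k := by
    rw [Fintype.card_coe, (mem_matchFinset.mp hM).2]
  have hcard2 : Fintype.card {v // v ∉ suppF M} = r := by
    rw [Fintype.card_subtype_compl]
    have : Fintype.card {v // v ∈ suppF M} = 2 * k := by
      rw [Fintype.card_coe, card_suppF (mem_matchFinset.mp hM).1, (mem_matchFinset.mp hM).2]
    omega
  have h1 : ((colorFinset G (k + r) (fun i => if (i : ℕ) < k then 2 else 1)).filter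
      (fun κ => Mset k κ = M)).card =
      Fintype.card {κ : V → Fin (k + r) // Valid G k r κ ∧ Mset k κ = M} := by
    rw [Fintype.card_subtype]
    congr 1
    ext κ
    simp only [Finset.mem_filter, Finset.mem_univ, true_and, valid_iff_mem.symm]
  rw [h1, hcard, Fintype.card_prod, Fintype.card_embedding_eq, Fintype.card_embedding_eq,
    hcard1, hcard2, Fintype.card_fin, Fintype.card_fin, Nat.descFactorial_self,
    Nat.descFactorial_self]

lemma colorcount_eq_matching_mul (hN : 2 * k + r = Fintype.card V) :
    (colorFinset G (k + r) (fun i => if (i : ℕ) < k then 2 else 1)).card =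
      (matchFinset Gᶜ k).card * (k.factorial * r.factorial) := by
  classical
  rw [Finset.card_eq_sum_card_fiberwise (f := fun κ => Mset k κ) (t := matchFinset Gᶜ k)
    (fun κ hκ => (valid_iff_mem.mp hκ).mset_mem le_self_add)]
  rw [Finset.sum_congr rfl (fun M hM => fiber_card hM hN), Finset.sum_const, smul_eq_mul]

end P2d

section Avoid

variable {V : Type*} [Fintype V]

/-- matchings of the complete graph avoiding a vertex set -/
noncomputable def avoidMatch (S : Finset V) (t : ℕ) : Finset (Finset (Sym2 V)) :=
  (matchFinset (⊤ : SimpleGraph V) t).filter (fun M => ∀ e ∈ M, ∀ v, v ∈ e → v ∉ S)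

lemma empty_mem_matchFinset_top : (∅ : Finset (Sym2 V)) ∈ matchFinset (⊤ : SimpleGraph V) 0 := by
  rw [mem_matchFinset]
  refine ⟨⟨?_, ?_⟩, Finset.card_empty⟩
  · intro e he; simp at he
  · intro e he; simp at he

lemma avoidMatch_card_of_compl_empty {S : Finset V} (h : Sᶜ = (∅ : Finset V)) (t : ℕ) :
    (avoidMatch S t).card = if t = 0 then 1 else 0 := by
  have hS : ∀ v : V, v ∈ S := by
    intro v
    by_contra hv
    have : v ∈ Sᶜ := Finset.mem_compl.mpr hv
    rw [h] at this
    simp at this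
  split_ifs with ht
  · subst ht
    have : avoidMatch S 0 = {∅} := by
      ext M
      simp only [avoidMatch, Finset.mem_filter, Finset.mem_singleton, mem_matchFinset]
      constructor
      · rintro ⟨⟨-, hc⟩, -⟩
        exact Finset.card_eq_zero.mp hc
      · rintro rfl
        refine ⟨mem_matchFinset.mp empty_mem_matchFinset_top, ?_⟩
        intro e he; simp at he
    rw [this, Finset.card_singleton]
  · rw [Finset.card_eq_zero, Finset.eq_empty_iff_forall_notMem]
    intro M hM
    simp only [avoidMatch, Finset.mem_filter, mem_matchFinset] at hM
    obtain ⟨⟨-, hc⟩, havoid⟩ := hM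
    have : M.Nonempty := Finset.card_pos.mp (by omega)
    obtain ⟨e, he⟩ := this
    obtain ⟨a, ha⟩ := sym2_exists_mem e
    exact havoid e he a ha (hS a)

lemma avoid_map_mem {W : Type*} [Fintype W] {S : Finset V} {S' : Finset W} {t : ℕ}
    (f : V → W) (hfS : ∀ v, v ∉ S → f v ∉ S')
    (hfinj : ∀ u v, u ∉ S → v ∉ S → f u = f v → u = v)
    {M : Finset (Sym2 V)} (hM : M ∈ avoidMatch S t) :
    M.image (Sym2.map f) ∈ avoidMatch S' t := by
  classical
  simp only [avoidMatch, Finset.mem_filter, mem_matchFinset] at hM ⊢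
  obtain ⟨⟨⟨hsub, hdisj⟩, hcard⟩, havoid⟩ := hM
  have havoid' : ∀ e' ∈ M.image (Sym2.map f), ∀ w, w ∈ e' → w ∉ S' := by
    intro e' he' w hw
    obtain ⟨e, he, rfl⟩ := Finset.mem_image.mp he'
    obtain ⟨a, ha, rfl⟩ := Sym2.mem_map.mp hw
    exact hfS a (havoid e he a ha)
  have hinj : Set.InjOn (Sym2.map f) ↑M := by
    intro e1 h1 e2 h2 heq
    induction e1 with
    | _ a b =>
      induction e2 with
      | _ c d =>
        simp only [Sym2.map_pair_eq, Sym2.eq_iff] at heq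
        have ha := havoid _ h1 a (Sym2.mem_mk_left a b)
        have hb := havoid _ h1 b (Sym2.mem_mk_right a b)
        have hc := havoid _ h2 c (Sym2.mem_mk_left c d)
        have hd := havoid _ h2 d (Sym2.mem_mk_right c d)
        rw [Sym2.eq_iff]
        rcases heq with ⟨h3, h4⟩ | ⟨h3, h4⟩
        · exact Or.inl ⟨hfinj a c ha hc h3, hfinj b d hb hd h4⟩
        · exact Or.inr ⟨hfinj a d ha hd h3, hfinj b c hb hc h4⟩
  refine ⟨⟨⟨?_, ?_⟩, ?_⟩, havoid'⟩
  · intro e' he'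
    obtain ⟨e, he, rfl⟩ := Finset.mem_image.mp (by exact_mod_cast he')
    have := hsub he
    induction e with
    | _ a b =>
      rw [SimpleGraph.mem_edgeSet, SimpleGraph.top_adj] at this
      rw [Sym2.map_pair_eq, SimpleGraph.mem_edgeSet, SimpleGraph.top_adj]
      exact fun hc => this (hfinj a b (havoid _ he a (Sym2.mem_mk_left a b))
        (havoid _ he b (Sym2.mem_mk_right a b)) hc)
  · intro e1' h1' e2' h2' hne w hw
    obtain ⟨e1, h1, rfl⟩ := Finset.mem_image.mp h1'
    obtain ⟨e2, h2, rfl⟩ := Finset.mem_image.mp h2'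
    obtain ⟨hw1, hw2⟩ := hw
    obtain ⟨a, ha, haw⟩ := Sym2.mem_map.mp hw1
    obtain ⟨b, hb, hbw⟩ := Sym2.mem_map.mp hw2
    have hab : a = b := hfinj a b (havoid _ h1 a ha) (havoid _ h2 b hb) (haw.trans hbw.symm)
    have hne12 : e1 ≠ e2 := fun hc => hne (by rw [hc])
    exact hdisj e1 h1 e2 h2 hne12 a ⟨ha, hab ▸ hb⟩
  · rw [Finset.card_image_of_injOn hinj, hcard]

lemma avoid_roundtrip {W : Type*} [Fintype W] {S : Finset V} {t : ℕ}
    (f : V → W) (f' : W → V) (hff' : ∀ v, v ∉ S → f' (f v) = v)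
    {M : Finset (Sym2 V)} (hM : M ∈ avoidMatch S t) :
    (M.image (Sym2.map f)).image (Sym2.map f') = M := by
  classical
  simp only [avoidMatch, Finset.mem_filter] at hM
  rw [Finset.image_image]
  have : ∀ e ∈ M, (Sym2.map f' ∘ Sym2.map f) e = e := by
    intro e he
    induction e with
    | _ a b =>
      simp only [Function.comp_apply, Sym2.map_pair_eq]
      rw [hff' a (hM.2 _ he a (Sym2.mem_mk_left a b)),
        hff' b (hM.2 _ he b (Sym2.mem_mk_right a b))]
  calc M.image (Sym2.map f' ∘ Sym2.map f) = M.image id := Finset.image_congr this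
    _ = M := Finset.image_id

lemma avoidMatch_card_eq {W : Type*} [Fintype W] (S : Finset V) (S' : Finset W) (t : ℕ)
    (h : (Sᶜ : Finset V).card = (S'ᶜ : Finset W).card) :
    (avoidMatch S t).card = (avoidMatch S' t).card := by
  classical
  rcases Finset.eq_empty_or_nonempty (Sᶜ : Finset V) with hemp | hne
  · have hemp' : (S'ᶜ : Finset W) = ∅ := by
      rw [← Finset.card_eq_zero, ← h, hemp, Finset.card_empty]
    rw [avoidMatch_card_of_compl_empty hemp, avoidMatch_card_of_compl_empty hemp']
  · have hne' : (S'ᶜ : Finset W).Nonempty := by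
      rw [← Finset.card_pos, ← h, Finset.card_pos]; exact hne
    obtain ⟨v0, hv0⟩ := hne
    obtain ⟨w0, hw0⟩ := hne'
    have hcards : Fintype.card {v // v ∈ (Sᶜ : Finset V)} = Fintype.card {w // w ∈ (S'ᶜ : Finset W)} := by
      rw [Fintype.card_coe, Fintype.card_coe, h]
    set ψ := Fintype.equivOfCardEq hcards with hψ
    set f : V → W := fun v => if hv : v ∈ (Sᶜ : Finset V) then (ψ ⟨v, hv⟩ : W) else w0 with hfdef
    set f' : W → V := fun w => if hw : w ∈ (S'ᶜ : Finset W) then (ψ.symm ⟨w, hw⟩ : V) else v0 with hf'def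
    have hfS : ∀ v, v ∉ S → f v ∉ S' := by
      intro v hv
      have hv' : v ∈ (Sᶜ : Finset V) := Finset.mem_compl.mpr hv
      rw [hfdef]
      simp only [dif_pos hv']
      exact Finset.mem_compl.mp (ψ ⟨v, hv'⟩).2
    have hf'S : ∀ w, w ∉ S' → f' w ∉ S := by
      intro w hw
      have hw' : w ∈ (S'ᶜ : Finset W) := Finset.mem_compl.mpr hw
      rw [hf'def]
      simp only [dif_pos hw']
      exact Finset.mem_compl.mp (ψ.symm ⟨w, hw'⟩).2
    have hff' : ∀ v, v ∉ S → f' (f v) = v := by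
      intro v hv
      have hv' : v ∈ (Sᶜ : Finset V) := Finset.mem_compl.mpr hv
      have h1 : f v = (ψ ⟨v, hv'⟩ : W) := by rw [hfdef]; simp only [dif_pos hv']
      have h2 : f v ∈ (S'ᶜ : Finset W) := by rw [h1]; exact (ψ ⟨v, hv'⟩).2
      rw [hf'def]
      simp only [dif_pos h2]
      have : (⟨f v, h2⟩ : {w // w ∈ (S'ᶜ : Finset W)}) = ψ ⟨v, hv'⟩ := Subtype.ext h1
      rw [this, Equiv.symm_apply_apply]
    have hf'f : ∀ w, w ∉ S' → f (f' w) = w := by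
      intro w hw
      have hw' : w ∈ (S'ᶜ : Finset W) := Finset.mem_compl.mpr hw
      have h1 : f' w = (ψ.symm ⟨w, hw'⟩ : V) := by rw [hf'def]; simp only [dif_pos hw']
      have h2 : f' w ∈ (Sᶜ : Finset V) := by rw [h1]; exact (ψ.symm ⟨w, hw'⟩).2
      rw [hfdef]
      simp only [dif_pos h2]
      have : (⟨f' w, h2⟩ : {v // v ∈ (Sᶜ : Finset V)}) = ψ.symm ⟨w, hw'⟩ := Subtype.ext h1
      rw [this, Equiv.apply_symm_apply]
    have hfinj : ∀ u v, u ∉ S → v ∉ S → f u = f v → u = v := by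
      intro u v hu hv heq
      rw [← hff' u hu, ← hff' v hv, heq]
    have hf'inj : ∀ u v, u ∉ S' → v ∉ S' → f' u = f' v → u = v := by
      intro u v hu hv heq
      rw [← hf'f u hu, ← hf'f v hv, heq]
    refine Finset.card_bij' (fun M _ => M.image (Sym2.map f))
      (fun M' _ => M'.image (Sym2.map f'))
      (fun M hM => avoid_map_mem f hfS hfinj hM)
      (fun M' hM' => avoid_map_mem f' hf'S hf'inj hM')
      (fun M hM => avoid_roundtrip f f' hff' hM)
      (fun M' hM' => avoid_roundtrip f' f hf'f hM')

end Avoid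

section InclExcl

variable {V : Type*} [Fintype V]

lemma edge_mem_compl_iff {G : SimpleGraph V} {e : Sym2 V}
    (he : e ∈ (⊤ : SimpleGraph V).edgeSet) : e ∈ Gᶜ.edgeSet ↔ e ∉ G.edgeSet := by
  induction e with
  | _ a b =>
    rw [SimpleGraph.mem_edgeSet, SimpleGraph.top_adj] at he
    rw [SimpleGraph.mem_edgeSet, SimpleGraph.mem_edgeSet, SimpleGraph.compl_adj]
    constructor
    · rintro ⟨-, h⟩; exact h
    · intro h; exact ⟨he, h⟩

lemma subset_count {G : SimpleGraph V} {j k : ℕ} (hjk : j ≤ k) {M' : Finset (Sym2 V)}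
    (hM' : M' ∈ matchFinset Gᶜ j) :
    ((matchFinset (⊤ : SimpleGraph V) k).filter (fun M => M' ⊆ M)).card =
      (avoidMatch (suppF M') (k - j)).card := by
  classical
  obtain ⟨⟨hM'sub, hM'disj⟩, hM'card⟩ := mem_matchFinset.mp hM'
  refine Finset.card_bij' (fun M _ => M \ M') (fun M'' _ => M'' ∪ M') ?_ ?_ ?_ ?_
  · intro M hM
    rw [Finset.mem_filter, mem_matchFinset] at hM
    obtain ⟨⟨⟨hsub, hdisj⟩, hcard⟩, hM'M⟩ := hM
    simp only [avoidMatch, Finset.mem_filter, mem_matchFinset]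
    refine ⟨⟨⟨?_, ?_⟩, ?_⟩, ?_⟩
    · intro e he
      exact hsub (Finset.sdiff_subset (by exact_mod_cast he))
    · intro e1 h1 e2 h2 hne v hv
      exact hdisj e1 (Finset.sdiff_subset h1) e2 (Finset.sdiff_subset h2) hne v hv
    · rw [Finset.card_sdiff_of_subset hM'M, hcard, hM'card]
    · intro e he v hv hsupp
      obtain ⟨e', he', hve'⟩ := mem_suppF.mp hsupp
      have hee' : e ≠ e' := fun hc => (Finset.mem_sdiff.mp he).2 (hc ▸ he')
      exact hdisj e (Finset.sdiff_subset he) e' (hM'M he') hee' v ⟨hv, hve'⟩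
  · intro M'' hM''
    simp only [avoidMatch, Finset.mem_filter, mem_matchFinset] at hM''
    obtain ⟨⟨⟨hsub, hdisj⟩, hcard⟩, havoid⟩ := hM''
    have hdisjMM : Disjoint M'' M' := by
      rw [Finset.disjoint_left]
      intro e heM'' heM'
      obtain ⟨a, ha⟩ := sym2_exists_mem e
      exact havoid e heM'' a ha (mem_suppF.mpr ⟨e, heM', ha⟩)
    rw [Finset.mem_filter, mem_matchFinset]
    refine ⟨⟨⟨?_, ?_⟩, ?_⟩, Finset.subset_union_right⟩
    · intro e he
      rcases Finset.mem_union.mp (by exact_mod_cast he) with h | h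
      · exact hsub h
      · exact SimpleGraph.edgeSet_mono le_top (hM'sub h)
    · intro e1 h1 e2 h2 hne v hv
      rcases Finset.mem_union.mp h1 with h1' | h1' <;>
        rcases Finset.mem_union.mp h2 with h2' | h2'
      · exact hdisj e1 h1' e2 h2' hne v hv
      · exact havoid e1 h1' v hv.1 (mem_suppF.mpr ⟨e2, h2', hv.2⟩)
      · exact havoid e2 h2' v hv.2 (mem_suppF.mpr ⟨e1, h1', hv.1⟩)
      · exact hM'disj e1 h1' e2 h2' hne v hv
    · rw [Finset.card_union_of_disjoint hdisjMM, hcard, hM'card]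
      omega
  · intro M hM
    rw [Finset.mem_filter] at hM
    exact Finset.sdiff_union_of_subset hM.2
  · intro M'' hM''
    simp only [avoidMatch, Finset.mem_filter, mem_matchFinset] at hM''
    apply Finset.union_sdiff_cancel_right
    rw [Finset.disjoint_left]
    intro e heM'' heM'
    obtain ⟨a, ha⟩ := sym2_exists_mem e
    exact hM''.2 e heM'' a ha (mem_suppF.mpr ⟨e, heM', ha⟩)

lemma incl_excl (G : SimpleGraph V) (k : ℕ) :
    ((matchFinset G k).card : ℤ) =
      ∑ j ∈ Finset.range (k + 1), (-1 : ℤ) ^ j *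
        ∑ M' ∈ matchFinset Gᶜ j,
          (((matchFinset (⊤ : SimpleGraph V) k).filter (fun M => M' ⊆ M)).card : ℤ) := by
  classical
  -- step 1
  have hstep1 : matchFinset G k =
      (matchFinset (⊤ : SimpleGraph V) k).filter (fun M => ↑M ⊆ G.edgeSet) := by
    ext M
    simp only [mem_matchFinset, Finset.mem_filter, IsMatch]
    constructor
    · rintro ⟨⟨hsub, hdisj⟩, hcard⟩
      exact ⟨⟨⟨fun e he => SimpleGraph.edgeSet_mono le_top (hsub he), hdisj⟩, hcard⟩, hsub⟩
    · rintro ⟨⟨⟨-, hdisj⟩, hcard⟩, hsub⟩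
      exact ⟨⟨hsub, hdisj⟩, hcard⟩
  have hstep2 : ((matchFinset G k).card : ℤ) =
      ∑ M ∈ matchFinset (⊤ : SimpleGraph V) k,
        (if (M.filter (fun e => e ∈ Gᶜ.edgeSet)) = ∅ then (1 : ℤ) else 0) := by
    rw [hstep1]
    rw [Finset.card_filter]
    push_cast
    refine Finset.sum_congr rfl ?_
    intro M hM
    have hMsub : ↑M ⊆ (⊤ : SimpleGraph V).edgeSet := (mem_matchFinset.mp hM).1.1
    have hcond : (↑M ⊆ G.edgeSet) ↔ (M.filter (fun e => e ∈ Gᶜ.edgeSet)) = ∅ := by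
      rw [Finset.filter_eq_empty_iff]
      constructor
      · intro hsub e heM
        rw [edge_mem_compl_iff (hMsub heM)]
        exact fun hc => hc (hsub heM)
      · intro hall e heM
        by_contra hc
        exact hall heM ((edge_mem_compl_iff (hMsub heM)).mpr hc)
    split_ifs with h1 h2 h2 <;> first | rfl | (exact absurd (hcond.mp h1) h2) |
      (exact absurd (hcond.mpr h2) h1)
  -- step 3: powerset expansion
  have hstep3 : ((matchFinset G k).card : ℤ) =
      ∑ M ∈ matchFinset (⊤ : SimpleGraph V) k,
        ∑ M' ∈ (Finset.univ : Finset (Finset (Sym2 V))),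
          (if M' ⊆ M ∧ ↑M' ⊆ Gᶜ.edgeSet then (-1 : ℤ) ^ M'.card else 0) := by
    rw [hstep2]
    refine Finset.sum_congr rfl ?_
    intro M hM
    have hps : (Finset.univ.filter (fun M' : Finset (Sym2 V) =>
        M' ⊆ M ∧ ↑M' ⊆ Gᶜ.edgeSet)) = (M.filter (fun e => e ∈ Gᶜ.edgeSet)).powerset := by
      ext M'
      simp only [Finset.mem_filter, Finset.mem_univ, true_and, Finset.mem_powerset,
        Finset.subset_iff]
      constructor
      · rintro ⟨h1, h2⟩
        intro e he
        exact ⟨h1 he, h2 he⟩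
      · intro h
        constructor
        · intro e he; exact (h he).1
        · intro e he; exact (h he).2
    have h2 : ∑ M' ∈ (Finset.univ : Finset (Finset (Sym2 V))),
        (if M' ⊆ M ∧ ↑M' ⊆ Gᶜ.edgeSet then (-1 : ℤ) ^ M'.card else 0) =
        ∑ M' ∈ Finset.univ.filter (fun M' : Finset (Sym2 V) =>
          M' ⊆ M ∧ ↑M' ⊆ Gᶜ.edgeSet), (-1 : ℤ) ^ M'.card := (Finset.sum_filter _ _).symm
    rw [h2, hps, Finset.sum_powerset_neg_one_pow_card]
  rw [hstep3, Finset.sum_comm]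
  -- inner sums
  have hinner : ∀ M' : Finset (Sym2 V),
      (∑ M ∈ matchFinset (⊤ : SimpleGraph V) k,
        if M' ⊆ M ∧ ↑M' ⊆ Gᶜ.edgeSet then (-1 : ℤ) ^ M'.card else 0) =
      (if ↑M' ⊆ Gᶜ.edgeSet then
        (-1 : ℤ) ^ M'.card *
          (((matchFinset (⊤ : SimpleGraph V) k).filter (fun M => M' ⊆ M)).card : ℤ)
        else 0) := by
    intro M'
    by_cases hsub : ↑M' ⊆ Gᶜ.edgeSet
    · rw [if_pos hsub]
      simp only [hsub, and_true]
      rw [← Finset.sum_filter, Finset.sum_const, nsmul_eq_mul, mul_comm]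
    · rw [if_neg hsub]
      apply Finset.sum_eq_zero
      intro M _
      rw [if_neg (fun hc => hsub hc.2)]
  simp only [hinner]
  -- restrict to the union of matchings of the complement
  set B : Finset (Finset (Sym2 V)) :=
    (Finset.range (k + 1)).biUnion (fun j => matchFinset Gᶜ j) with hB
  have hvanish : ∀ M' ∈ (Finset.univ : Finset (Finset (Sym2 V))), M' ∉ B →
      (if ↑M' ⊆ Gᶜ.edgeSet then
        (-1 : ℤ) ^ M'.card *
          (((matchFinset (⊤ : SimpleGraph V) k).filter (fun M => M' ⊆ M)).card : ℤ)
        else 0) = 0 := by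
    intro M' _ hnB
    by_cases hsub : ↑M' ⊆ Gᶜ.edgeSet
    · rw [if_pos hsub]
      rcases Finset.eq_empty_or_nonempty
        ((matchFinset (⊤ : SimpleGraph V) k).filter (fun M => M' ⊆ M)) with hemp | hne
      · rw [hemp]
        simp
      · exfalso
        obtain ⟨M, hMmem⟩ := hne
        rw [Finset.mem_filter] at hMmem
        obtain ⟨hMk, hM'M⟩ := hMmem
        obtain ⟨⟨-, hdisj⟩, hcard⟩ := mem_matchFinset.mp hMk
        refine hnB (Finset.mem_biUnion.mpr ⟨M'.card, ?_, ?_⟩)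
        · rw [Finset.mem_range]
          have := Finset.card_le_card hM'M
          omega
        · rw [mem_matchFinset]
          exact ⟨⟨hsub, fun e1 h1 e2 h2 hne v hv =>
            hdisj e1 (hM'M h1) e2 (hM'M h2) hne v hv⟩, rfl⟩
    · rw [if_neg hsub]
  rw [← Finset.sum_subset (Finset.subset_univ B) hvanish]
  have hdisjB : ∀ j1 ∈ (Finset.range (k+1) : Finset ℕ), ∀ j2 ∈ (Finset.range (k+1) : Finset ℕ),
      j1 ≠ j2 → Disjoint (matchFinset (Gᶜ) j1) (matchFinset (Gᶜ) j2) := by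
    intro j1 _ j2 _ hne
    rw [Finset.disjoint_left]
    intro M' h1 h2
    exact hne (((mem_matchFinset.mp h1).2.symm).trans (mem_matchFinset.mp h2).2)
  rw [hB, Finset.sum_biUnion hdisjB]
  refine Finset.sum_congr rfl ?_
  intro j hj
  rw [Finset.mul_sum]
  refine Finset.sum_congr rfl ?_
  intro M' hM'
  obtain ⟨⟨hsub, -⟩, hcard⟩ := mem_matchFinset.mp hM'
  rw [if_pos hsub, hcard]

end InclExcl

lemma avoidMatch_empty {V : Type*} [Fintype V] (t : ℕ) :
    avoidMatch (∅ : Finset V) t = matchFinset (⊤ : SimpleGraph V) t := by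
  rw [avoidMatch, Finset.filter_true_of_mem]
  intro M _ e _ v _
  exact Finset.notMem_empty v

/-- For every `k`, two finite simple graphs with the same chromatic symmetric function
have the same number of matchings with exactly `k` edges. -/
theorem matchingCount_eq_of_csf_eq {V W : Type*} [Fintype V] [Fintype W]
    (G : SimpleGraph V) (H : SimpleGraph W) (h : ∀ n, csf G n = csf H n) (k : ℕ) :
    matchingCount G k = matchingCount H k := by
  classical
  set N := Fintype.card V with hNdef
  have hNW : Fintype.card W = N := (card_eq_of_csf_eq G H h).symm
  have key : ∀ j : ℕ, (matchFinset Gᶜ j).card = (matchFinset Hᶜ j).card := by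
    intro j
    by_cases hj : 2 * j ≤ N
    · set r := N - 2 * j with hr
      have hNG : 2 * j + r = Fintype.card V := by omega
      have hNH : 2 * j + r = Fintype.card W := by omega
      have h1 := colorcount_eq_matching_mul (G := G) (k := j) (r := r) hNG
      have h2 := colorcount_eq_matching_mul (G := H) (k := j) (r := r) hNH
      set d : Fin (j + r) →₀ ℕ := Finsupp.equivFunOnFinite.symm
        (fun i : Fin (j + r) => if (i : ℕ) < j then 2 else 1) with hd
      have hco := congrArg (MvPolynomial.coeff d) (h (j + r))
      rw [csf_coeff, csf_coeff] at hco
      have hdi : (fun i : Fin (j + r) => d i) =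
          (fun i : Fin (j + r) => if (i : ℕ) < j then 2 else 1) := by
        funext i; rw [hd]; simp
      rw [hdi] at hco
      have hcards := Nat.cast_injective (R := ℤ) hco
      rw [h1, h2] at hcards
      have hfac : 0 < j.factorial * r.factorial :=
        Nat.mul_pos (Nat.factorial_pos j) (Nat.factorial_pos r)
      exact Nat.eq_of_mul_eq_mul_right hfac hcards
    · have hzG : matchingCount Gᶜ j = 0 := matchingCount_eq_zero Gᶜ j (by omega)
      have hzH : matchingCount Hᶜ j = 0 := matchingCount_eq_zero Hᶜ j (by omega)
      rw [matchingCount_eq_card] at hzG hzH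
      rw [hzG, hzH]
  rw [matchingCount_eq_card, matchingCount_eq_card]
  have hZ : ((matchFinset G k).card : ℤ) = ((matchFinset H k).card : ℤ) := by
    rw [incl_excl G k, incl_excl H k]
    refine Finset.sum_congr rfl ?_
    intro j hj
    rw [Finset.mem_range] at hj
    have hjk : j ≤ k := by omega
    congr 1
    have hG : ∀ M' ∈ matchFinset Gᶜ j,
        (((matchFinset (⊤ : SimpleGraph V) k).filter (fun M => M' ⊆ M)).card : ℤ) =
        ((matchFinset (⊤ : SimpleGraph (Fin (N - 2 * j))) (k - j)).card : ℤ) := by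
      intro M' hM'
      rw [subset_count hjk hM']
      have hcompl : ((suppF M')ᶜ : Finset V).card =
          ((∅ : Finset (Fin (N - 2 * j)))ᶜ).card := by
        rw [Finset.card_compl, card_suppF (mem_matchFinset.mp hM').1,
          (mem_matchFinset.mp hM').2, Finset.compl_empty, Finset.card_univ, Fintype.card_fin]
      rw [avoidMatch_card_eq (suppF M') (∅ : Finset (Fin (N - 2 * j))) (k - j) hcompl,
        avoidMatch_empty]
    have hH : ∀ M' ∈ matchFinset Hᶜ j,
        (((matchFinset (⊤ : SimpleGraph W) k).filter (fun M => M' ⊆ M)).card : ℤ) =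
        ((matchFinset (⊤ : SimpleGraph (Fin (N - 2 * j))) (k - j)).card : ℤ) := by
      intro M' hM'
      rw [subset_count hjk hM']
      have hcompl : ((suppF M')ᶜ : Finset W).card =
          ((∅ : Finset (Fin (N - 2 * j)))ᶜ).card := by
        rw [Finset.card_compl, card_suppF (mem_matchFinset.mp hM').1,
          (mem_matchFinset.mp hM').2, Finset.compl_empty, Finset.card_univ, Fintype.card_fin,
          hNW]
      rw [avoidMatch_card_eq (suppF M') (∅ : Finset (Fin (N - 2 * j))) (k - j) hcompl,
        avoidMatch_empty]
    rw [Finset.sum_congr rfl hG, Finset.sum_congr rfl hH, Finset.sum_const, Finset.sum_const,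
      key j]
  exact_mod_cast hZ
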